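/- Let M be a compact metric space, φ : ℝ × M → M a continuous flow, and g : M → ℝ a continuous function. Suppose x₀ ∈ M satisfies ∫₀^t g(φ_s(x₀)) ds ≤ 0 for all t ≥ 0. Then there exists a φ-invariant Borel probability measure μ on the ω-limit set of x₀ such that ∫ g dμ ≤ 0. -/

import Mathlib

/-!
The time averages `(1/T) ∫₀ᵀ δ_{φ_s x₀} ds` are probability measures, and the space of Borel
probability measures on a compact metric space is compact and metrizable, so some sequence of
them converges weakly to a probability measure `μ`. Shifting the time window by `t` changes the
average of a bounded function `f` by at most `2 ‖f‖ |t| / T`, so `μ` is `φ_t`-invariant; the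
average gives mass at most `k / T` to the open complement of the closure of `{φ_t x₀ | t ≥ k}`,
so `μ` lives on the ω-limit set; and `∫ g` is `≤ 0` for every average, hence for `μ`.
-/

open MeasureTheory Filter Topology Set BoundedContinuousFunction

section TimeAverage

variable {X : Type*} [MeasurableSpace X]

noncomputable def timeAverage (γ : ℝ → X) (T : ℝ) : Measure X :=
  (ENNReal.ofReal T)⁻¹ • (volume.restrict (Ioc 0 T)).map γ

lemma isProbabilityMeasure_timeAverage {γ : ℝ → X} (hγ : Measurable γ) {T : ℝ} (hT : 0 < T) :
    IsProbabilityMeasure (timeAverage γ T) := by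
  constructor
  rw [timeAverage, Measure.smul_apply, Measure.map_apply hγ MeasurableSet.univ, preimage_univ,
    Measure.restrict_apply_univ, Real.volume_Ioc, sub_zero, smul_eq_mul,
    ENNReal.inv_mul_cancel (by simpa using hT) ENNReal.ofReal_ne_top]

lemma integral_timeAverage {E : Type*} [NormedAddCommGroup E] [NormedSpace ℝ E]
    {γ : ℝ → X} (hγ : Measurable γ) {f : X → E} (hf : StronglyMeasurable f) {T : ℝ}
    (hT : 0 ≤ T) :
    ∫ x, f x ∂timeAverage γ T = T⁻¹ • ∫ s in 0..T, f (γ s) := by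
  rw [timeAverage, integral_smul_measure, integral_map hγ.aemeasurable hf.aestronglyMeasurable,
    intervalIntegral.integral_of_le hT, ENNReal.toReal_inv, ENNReal.toReal_ofReal hT]

lemma timeAverage_compl_closure_le [TopologicalSpace X] [OpensMeasurableSpace X]
    {γ : ℝ → X} (hγ : Measurable γ) {T : ℝ} (hT : 0 < T) (k : ℝ) :
    timeAverage γ T (closure {y | ∃ t ≥ k, y = γ t})ᶜ ≤ ENNReal.ofReal (k / T) := by
  have hmeas : MeasurableSet (closure {y | ∃ t ≥ k, y = γ t})ᶜ :=
    isClosed_closure.measurableSet.compl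
  have hsub : γ ⁻¹' (closure {y | ∃ t ≥ k, y = γ t})ᶜ ∩ Ioc 0 T ⊆ Ioc 0 k := by
    rintro s ⟨hs, hsT⟩
    refine ⟨hsT.1, not_lt.1 fun hks => hs (subset_closure ⟨s, hks.le, rfl⟩)⟩
  rw [timeAverage, Measure.smul_apply, Measure.map_apply hγ hmeas,
    Measure.restrict_apply (hγ hmeas), smul_eq_mul, ENNReal.ofReal_div_of_pos hT,
    div_eq_mul_inv, mul_comm]
  gcongr
  simpa using measure_mono (μ := volume) hsub

end TimeAverage

lemma norm_intervalIntegral_comp_add_sub_le {E : Type*} [NormedAddCommGroup E] [NormedSpace ℝ E]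
    {f : ℝ → E} (hf : ∀ a b, IntervalIntegrable f volume a b) {C : ℝ} (hC : ∀ x, ‖f x‖ ≤ C)
    (t T : ℝ) :
    ‖(∫ s in 0..T, f (t + s)) - ∫ s in 0..T, f s‖ ≤ 2 * C * |t| := by
  have hbound : ∀ a b, ‖∫ s in a..b, f s‖ ≤ C * |b - a| :=
    fun a b => intervalIntegral.norm_integral_le_of_norm_le_const fun x _ => hC x
  rw [intervalIntegral.integral_comp_add_left, add_zero,
    intervalIntegral.integral_interval_sub_interval_comm' (hf _ _) (hf _ _) (hf _ _)]
  calc ‖(∫ s in T..t + T, f s) - ∫ s in 0..t, f s‖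
      ≤ ‖∫ s in T..t + T, f s‖ + ‖∫ s in 0..t, f s‖ := norm_sub_le _ _
    _ ≤ C * |t + T - T| + C * |t - 0| := add_le_add (hbound _ _) (hbound _ _)
    _ = 2 * C * |t| := by ring_nf

section Flow

variable {X : Type*} [TopologicalSpace X] [MeasurableSpace X] [BorelSpace X]
  {φ : ℝ → X → X}

lemma abs_integral_timeAverage_comp_flow_sub_le
    (hφ : Continuous fun p : ℝ × X => φ p.1 p.2) (hadd : ∀ s t x, φ (s + t) x = φ s (φ t x))
    (x₀ : X) (f : X →ᵇ ℝ) (t : ℝ) {T : ℝ} (hT : 0 ≤ T) :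
    |∫ x, f (φ t x) ∂timeAverage (φ · x₀) T - ∫ x, f x ∂timeAverage (φ · x₀) T|
      ≤ 2 * ‖f‖ * |t| / T := by
  have horbit : Continuous (φ · x₀) := hφ.comp (continuous_id.prodMk continuous_const)
  have hφt : Continuous (φ t) := hφ.comp (continuous_const.prodMk continuous_id)
  rw [integral_timeAverage (f := fun x => f (φ t x)) horbit.measurable
      (f.continuous.comp hφt).stronglyMeasurable hT,
    integral_timeAverage horbit.measurable f.continuous.stronglyMeasurable hT,
    smul_eq_mul, smul_eq_mul, ← mul_sub, abs_mul, abs_inv, abs_of_nonneg hT, div_eq_inv_mul]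
  gcongr
  simp_rw [← hadd]
  exact norm_intervalIntegral_comp_add_sub_le
    (fun a b => (f.continuous.comp horbit).intervalIntegrable a b) (fun x => f.norm_coe_le_norm _) t T

end Flow

section WeakLimit

variable {Ω ι : Type*} [MeasurableSpace Ω] [TopologicalSpace Ω] [HasOuterApproxClosed Ω]
  [BorelSpace Ω] {L : Filter ι} [L.NeBot] {νs : ι → ProbabilityMeasure Ω} {μ : ProbabilityMeasure Ω}

lemma map_eq_of_tendsto_of_integral_comp_sub_tendsto_zero (hν : Tendsto νs L (𝓝 μ))
    {ψ : Ω → Ω} (hψ : Continuous ψ)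
    (h : ∀ f : Ω →ᵇ ℝ, Tendsto (fun i => ∫ x, f (ψ x) ∂νs i - ∫ x, f x ∂νs i) L (𝓝 0)) :
    (μ : Measure Ω).map ψ = μ := by
  refine ext_of_forall_integral_eq_of_IsFiniteMeasure fun f => ?_
  rw [integral_map hψ.aemeasurable f.continuous.aestronglyMeasurable]
  have hf := ProbabilityMeasure.tendsto_iff_forall_integral_tendsto.1 hν f
  have hfψ := ProbabilityMeasure.tendsto_iff_forall_integral_tendsto.1 hν (f.compContinuous ⟨ψ, hψ⟩)
  refine tendsto_nhds_unique hfψ ?_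
  simpa using (h f).add hf

lemma measure_eq_zero_of_tendsto_of_isOpen (hν : Tendsto νs L (𝓝 μ)) {G : Set Ω} (hG : IsOpen G)
    (h : Tendsto (fun i => (νs i : Measure Ω) G) L (𝓝 0)) :
    (μ : Measure Ω) G = 0 :=
  le_antisymm ((ProbabilityMeasure.le_liminf_measure_open_of_tendsto hν hG).trans h.liminf_eq.le)
    zero_le

end WeakLimit

lemma compl_omegaLimit_subset_iUnion_nat {X : Type*} [TopologicalSpace X] (γ : ℝ → X) :
    (⋂ T ∈ Ici (0:ℝ), closure {y | ∃ t ≥ T, y = γ t})ᶜ ⊆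
      ⋃ k : ℕ, (closure {y | ∃ t ≥ (k:ℝ), y = γ t})ᶜ := by
  intro x hx
  simp only [mem_compl_iff, mem_iInter, not_forall] at hx
  obtain ⟨T, -, hxT⟩ := hx
  refine mem_iUnion.2 ⟨⌈T⌉₊, fun hx => hxT (closure_mono ?_ hx)⟩
  rintro y ⟨t, ht, rfl⟩
  exact ⟨t, (Nat.le_ceil T).trans ht, rfl⟩

theorem stmt_5_general {M : Type*} [MetricSpace M] [CompactSpace M]
    [MeasurableSpace M] [BorelSpace M]
    (φ : ℝ → M → M) (hφ : Continuous fun p : ℝ × M => φ p.1 p.2)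
    (hadd : ∀ s t x, φ (s + t) x = φ s (φ t x))
    (g : M → ℝ) (hg : Continuous g)
    (x₀ : M) (hx₀ : ∀ t ≥ (0:ℝ), ∫ s in (0:ℝ)..t, g (φ s x₀) ≤ 0) :
    ∃ μ : Measure M, IsProbabilityMeasure μ ∧
      (∀ t : ℝ, Measure.map (φ t) μ = μ) ∧
      μ (⋂ T ∈ Set.Ici (0:ℝ), closure {y | ∃ t ≥ T, y = φ t x₀})ᶜ = 0 ∧
      ∫ y, g y ∂μ ≤ 0 := by
  have horbit : Continuous (φ · x₀) := hφ.comp (continuous_id.prodMk continuous_const)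
  have hT : ∀ n : ℕ, (0:ℝ) < n + 1 := fun n => n.cast_add_one_pos
  let ν : ℕ → ProbabilityMeasure M := fun n =>
    ⟨timeAverage (φ · x₀) (n + 1), isProbabilityMeasure_timeAverage horbit.measurable (hT n)⟩
  obtain ⟨μ, ψ, hψ, hlim⟩ := CompactSpace.tendsto_subseq ν
  have hTψ : Tendsto (fun n => ((ψ n : ℕ) : ℝ) + 1) atTop atTop :=
    tendsto_atTop_add_const_right _ 1 (tendsto_natCast_atTop_atTop.comp hψ.tendsto_atTop)
  refine ⟨μ, inferInstance, fun t => ?_, ?_, ?_⟩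
  · refine map_eq_of_tendsto_of_integral_comp_sub_tendsto_zero hlim
      (hφ.comp (continuous_const.prodMk continuous_id)) fun f => ?_
    refine squeeze_zero_norm (fun n => ?_)
      (tendsto_const_nhds (x := 2 * ‖f‖ * |t|) |>.div_atTop hTψ)
    exact abs_integral_timeAverage_comp_flow_sub_le hφ hadd x₀ f t (hT _).le
  · refine measure_mono_null (compl_omegaLimit_subset_iUnion_nat _)
      (measure_iUnion_null fun k => measure_eq_zero_of_tendsto_of_isOpen hlim
        isClosed_closure.isOpen_compl ?_)
    have hbound := ENNReal.tendsto_ofReal (tendsto_const_nhds (x := (k:ℝ)).div_atTop hTψ)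
    rw [ENNReal.ofReal_zero] at hbound
    exact tendsto_of_tendsto_of_tendsto_of_le_of_le tendsto_const_nhds hbound (fun n => zero_le)
      fun n => timeAverage_compl_closure_le horbit.measurable (hT _) k
  · refine le_of_tendsto' (ProbabilityMeasure.tendsto_iff_forall_integral_tendsto.1 hlim
      (mkOfCompact ⟨g, hg⟩)) fun n => ?_
    change ∫ x, g x ∂timeAverage (φ · x₀) (ψ n + 1) ≤ 0
    rw [integral_timeAverage horbit.measurable hg.stronglyMeasurable (hT _).le, smul_eq_mul]
    exact mul_nonpos_of_nonneg_of_nonpos (inv_nonneg.2 (hT _).le) (hx₀ _ (hT _).le)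

theorem stmt_5 {M : Type*} [MetricSpace M] [CompactSpace M]
    [MeasurableSpace M] [BorelSpace M]
    (φ : ℝ → M → M) (hφ : Continuous fun p : ℝ × M => φ p.1 p.2)
    (h0 : ∀ x, φ 0 x = x) (hadd : ∀ s t x, φ (s + t) x = φ s (φ t x))
    (g : M → ℝ) (hg : Continuous g)
    (x₀ : M) (hx₀ : ∀ t ≥ (0:ℝ), ∫ s in (0:ℝ)..t, g (φ s x₀) ≤ 0) :
    ∃ μ : Measure M, IsProbabilityMeasure μ ∧
      (∀ t : ℝ, Measure.map (φ t) μ = μ) ∧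
      μ (⋂ T ∈ Set.Ici (0:ℝ), closure {y | ∃ t ≥ T, y = φ t x₀})ᶜ = 0 ∧
      ∫ y, g y ∂μ ≤ 0 :=
  stmt_5_general φ hφ hadd g hg x₀ hx₀
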